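/- For every θ ∈ (0, π) and all real ψ₁, ψ₂, the quantity sin θ (sin ψ₁ + sin ψ₂) + cos ψ₁ − cos ψ₂ is at most 2√(1 + sin²θ). Consequently the CHSH success probability P(θ, ψ₁, ψ₂) = 1/2 + (1/8)(sin θ (sin ψ₁ + sin ψ₂) + cos ψ₁ − cos ψ₂) satisfies P(θ, ψ₁, ψ₂) ≤ 1/2 + √(1 + sin²θ)/4 for all ψ₁, ψ₂. -/

import Mathlib

open Real

/-- Cauchy–Schwarz for `(a, b)` against the unit vector `(sin ψ, cos ψ)`. -/
lemma mul_sin_add_mul_cos_le_sqrt (a b ψ : ℝ) : a * sin ψ + b * cos ψ ≤ √(a ^ 2 + b ^ 2) := by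
  have hsq : (a * sin ψ + b * cos ψ) ^ 2 ≤ a ^ 2 + b ^ 2 := by
    nlinarith [sin_sq_add_cos_sq ψ, sq_nonneg (a * cos ψ - b * sin ψ)]
  exact (le_abs_self _).trans (abs_le_sqrt hsq)

/-- Each of the two measurement angles contributes at most `√(1 + s²)`. -/
lemma chsh_correlator_le (s ψ₁ ψ₂ : ℝ) :
    s * (sin ψ₁ + sin ψ₂) + cos ψ₁ - cos ψ₂ ≤ 2 * √(1 + s ^ 2) := by
  have h₁ := mul_sin_add_mul_cos_le_sqrt s 1 ψ₁
  have h₂ := mul_sin_add_mul_cos_le_sqrt s (-1) ψ₂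
  rw [one_pow, add_comm (s ^ 2)] at h₁
  rw [neg_one_sq, add_comm (s ^ 2)] at h₂
  linarith

theorem stmt_1 (θ : ℝ) :
    (∀ ψ₁ ψ₂ : ℝ,
      Real.sin θ * (Real.sin ψ₁ + Real.sin ψ₂) + Real.cos ψ₁ - Real.cos ψ₂ ≤
        2 * Real.sqrt (1 + Real.sin θ ^ 2)) ∧
    (∀ ψ₁ ψ₂ : ℝ,
      1 / 2 + (1 / 8) * (Real.sin θ * (Real.sin ψ₁ + Real.sin ψ₂)
          + Real.cos ψ₁ - Real.cos ψ₂) ≤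
        1 / 2 + Real.sqrt (1 + Real.sin θ ^ 2) / 4) := by
  refine ⟨chsh_correlator_le (sin θ), fun ψ₁ ψ₂ => ?_⟩
  linarith [chsh_correlator_le (sin θ) ψ₁ ψ₂]
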